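/- Let Ω be an open properly convex domain in RP^n with Hilbert metric d_Ω. If ℓ is a projective line meeting Ω in a proper segment α = (a_-, a_+) with endpoints in Fr(Ω), H_± are supporting hyperplanes to Ω at a_±, P = H_+ ∩ H_-, and π : Ω → α is projection along P onto α, then d_Ω(x, y) ≥ d_Ω(π x, π y) for all x, y ∈ Ω. -/

import Mathlib

open Pointwise

/-- A cone in `ℝ^{n+1}`: invariant under positive scaling. -/
def IsCone {n : ℕ} (C : Set (Fin (n+1) → ℝ)) : Prop :=
  ∀ t : ℝ, 0 < t → t • C = C

/-- Sharpness: the closure contains no pair of antipodal nonzero vectors, i.e. the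
projectivized domain is properly convex. -/
def IsSharp {n : ℕ} (C : Set (Fin (n+1) → ℝ)) : Prop :=
  ∀ v : Fin (n+1) → ℝ, v ≠ 0 → v ∈ closure C → -v ∉ closure C

/-- The Hilbert distance between the rays of `x` and `y` in the projectivized cone `C`
equals `d`.  Either the rays coincide and `d = 0`, or there are boundary rays `a, b`
(endpoints of the chord) with `x = αa+βb`, `y = γa+δb` (all coefficients positive), and
`d = (1/2)|log((βγ)/(αδ))|` (the cross-ratio formula for the Hilbert metric). -/
def HilbertDistEq {n : ℕ} (C : Set (Fin (n+1) → ℝ)) (x y : Fin (n+1) → ℝ) (d : ℝ) : Prop :=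
  ((∃ t : ℝ, 0 < t ∧ y = t • x) ∧ d = 0) ∨
  (∃ a b : Fin (n+1) → ℝ, a ∈ frontier C ∧ b ∈ frontier C ∧
    ∃ α β γ δ : ℝ, 0 < α ∧ 0 < β ∧ 0 < γ ∧ 0 < δ ∧
      x = α • a + β • b ∧ y = γ • a + δ • b ∧
      d = |Real.log ((β * γ) / (α * δ))| / 2)

/-!
The functionals `ψ` and `φ` map the plane of the chord through `x`, `y` (with frontier endpoints
`a'`, `b'`) to the closed positive quadrant of `ℝ²`, and the Hilbert distance on `α` of `π x` and
`π y` is the log-cross-ratio of the images `(ψ x, φ x)` and `(ψ y, φ y)`.  A nonnegative `2 × 2`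
matrix does not increase this log-cross-ratio (Birkhoff's contraction), so
`d_α(π x, π y) ≤ d_Ω(x, y)`.  Conversely, the endpoints of any chord through `π x` and `π y`
lie in the plane of `α` but outside `Ω`, hence on `H₊` or `H₋`; so they are the endpoints of `α`
and `d_Ω(π x, π y) = d_α(π x, π y)`.
-/

open Real Submodule

section CrossRatio

variable {α β γ δ e f g h : ℝ}

theorem cross_ratio_le_mul {K : ℝ} (hK : 1 ≤ K) (h₁ : β * γ ≤ K * (α * δ))
    (h₂ : α * δ ≤ K * (β * γ)) (hα : 0 ≤ α) (hβ : 0 ≤ β) (hγ : 0 ≤ γ) (hδ : 0 ≤ δ)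
    (he : 0 ≤ e) (hf : 0 ≤ f) (hg : 0 ≤ g) (hh : 0 ≤ h) :
    (α * f + β * h) * (γ * e + δ * g) ≤ K * ((α * e + β * g) * (γ * f + δ * h)) := by
  have hK' : 0 ≤ K - 1 := sub_nonneg.2 hK
  have expand : K * ((α * e + β * g) * (γ * f + δ * h)) - (α * f + β * h) * (γ * e + δ * g) =
      (K - 1) * (α * γ * (e * f)) + (K - 1) * (β * δ * (g * h)) +
        (K * (α * δ) - β * γ) * (e * h) + (K * (β * γ) - α * δ) * (f * g) := by
    ring
  have t₁ : 0 ≤ (K - 1) * (α * γ * (e * f)) := mul_nonneg hK' (by positivity)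
  have t₂ : 0 ≤ (K - 1) * (β * δ * (g * h)) := mul_nonneg hK' (by positivity)
  have t₃ : 0 ≤ (K * (α * δ) - β * γ) * (e * h) := mul_nonneg (by linarith) (by positivity)
  have t₄ : 0 ≤ (K * (β * γ) - α * δ) * (f * g) := mul_nonneg (by linarith) (by positivity)
  linarith

theorem abs_log_div_le_of_le_exp_mul {N D L : ℝ} (hN : 0 < N) (hD : 0 < D)
    (h₁ : N ≤ exp L * D) (h₂ : D ≤ exp L * N) : |log (N / D)| ≤ L := by
  have l₁ := log_le_log hN h₁
  have l₂ := log_le_log hD h₂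
  rw [log_mul (exp_pos L).ne' hD.ne', log_exp] at l₁
  rw [log_mul (exp_pos L).ne' hN.ne', log_exp] at l₂
  rw [log_div hN.ne' hD.ne', abs_le]
  constructor <;> linarith

/-- Birkhoff's contraction for the nonnegative matrix `!![e, g; f, h]` acting on the positive
vectors `(α, β)` and `(γ, δ)`. -/
theorem abs_log_cross_ratio_le (hα : 0 < α) (hβ : 0 < β) (hγ : 0 < γ) (hδ : 0 < δ)
    (he : 0 ≤ e) (hf : 0 ≤ f) (hg : 0 ≤ g) (hh : 0 ≤ h)
    (hx₁ : 0 < α * e + β * g) (hx₂ : 0 < α * f + β * h)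
    (hy₁ : 0 < γ * e + δ * g) (hy₂ : 0 < γ * f + δ * h) :
    |log ((α * f + β * h) * (γ * e + δ * g) / ((α * e + β * g) * (γ * f + δ * h)))| ≤
      |log (β * γ / (α * δ))| := by
  set r := β * γ / (α * δ)
  have hr : 0 < r := by positivity
  have hK : 1 ≤ exp |log r| := one_le_exp (abs_nonneg _)
  have h₁ : β * γ ≤ exp |log r| * (α * δ) := by
    rw [← div_le_iff₀ (by positivity)]
    calc r = exp (log r) := (exp_log hr).symm
      _ ≤ exp |log r| := exp_le_exp.2 (le_abs_self _)
  have h₂ : α * δ ≤ exp |log r| * (β * γ) := by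
    rw [← div_le_iff₀ (by positivity), ← inv_div]
    calc r⁻¹ = exp (-log r) := by rw [exp_neg, exp_log hr]
      _ ≤ exp |log r| := exp_le_exp.2 (neg_le_abs _)
  exact abs_log_div_le_of_le_exp_mul (by positivity) (by positivity)
    (cross_ratio_le_mul hK h₁ h₂ hα.le hβ.le hγ.le hδ.le he hf hg hh)
    (cross_ratio_le_mul hK h₁ h₂ hα.le hβ.le hγ.le hδ.le hf he hh hg)

/-- The matrix `!![e, g; f, h]` is diagonal or antidiagonal. -/
theorem abs_log_cross_ratio_eq_of_mul_eq_zero (hef : e * f = 0) (hgh : g * h = 0)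
    (hx₁ : 0 < α * e + β * g) (hx₂ : 0 < α * f + β * h)
    (hy₁ : 0 < γ * e + δ * g) (hy₂ : 0 < γ * f + δ * h) :
    |log ((α * f + β * h) * (γ * e + δ * g) / ((α * e + β * g) * (γ * f + δ * h)))| =
      |log (β * γ / (α * δ))| := by
  rcases mul_eq_zero.1 hef with rfl | rfl
  · have hg : g ≠ 0 := by rintro rfl; simp at hx₁
    obtain rfl : h = 0 := (mul_eq_zero.1 hgh).resolve_left hg
    have hf : f ≠ 0 := by rintro rfl; simp at hx₂
    simp only [mul_zero, zero_add, add_zero]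
    rw [show α * f * (δ * g) / (β * g * (γ * f)) = (α * δ) * (f * g) / ((β * γ) * (f * g)) by
      ring, mul_div_mul_right _ _ (mul_ne_zero hf hg), ← inv_div, log_inv, abs_neg]
  · have hh : h ≠ 0 := by rintro rfl; simp at hx₂
    obtain rfl : g = 0 := (mul_eq_zero.1 hgh).resolve_right hh
    have he : e ≠ 0 := by rintro rfl; simp at hx₁
    simp only [mul_zero, zero_add, add_zero]
    rw [show β * h * (γ * e) / (α * e * (δ * h)) = (β * γ) * (e * h) / ((α * δ) * (e * h)) by
      ring, mul_div_mul_right _ _ (mul_ne_zero he hh)]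

end CrossRatio

theorem mem_span_pair_of_det_ne_zero {K M : Type*} [Field K] [AddCommGroup M] [Module K M]
    {p q u v : M} {α β γ δ : K} (hu : u = α • p + β • q) (hv : v = γ • p + δ • q)
    (hdet : α * δ - β * γ ≠ 0) : p ∈ span K {u, v} := by
  have hp : (α * δ - β * γ) • p = δ • u - β • v := by rw [hu, hv]; module
  rw [← inv_smul_smul₀ hdet p, hp]
  exact smul_mem _ _ (sub_mem (smul_mem _ _ (subset_span (by simp)))
    (smul_mem _ _ (subset_span (by simp))))

theorem mul_eq_zero_of_mem_span_pair_of_notMem {E : Type*} [AddCommGroup E] [Module ℝ E]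
    {C : Set E} {a b w : E} {φ ψ : E →ₗ[ℝ] ℝ}
    (hchord : ∀ s t : ℝ, 0 < s → 0 < t → s • a + t • b ∈ C)
    (hφa : φ a = 0) (hψb : ψ b = 0) (hψa : 0 < ψ a) (hφb : 0 < φ b)
    (hw : w ∈ span ℝ {a, b}) (hwC : w ∉ C) (hψw : 0 ≤ ψ w) (hφw : 0 ≤ φ w) :
    ψ w * φ w = 0 := by
  obtain ⟨s, t, rfl⟩ := mem_span_pair.1 hw
  simp only [map_add, map_smul, smul_eq_mul, hφa, hψb, mul_zero, add_zero, zero_add]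
    at hψw hφw ⊢
  by_contra hne
  obtain ⟨hs, ht⟩ := mul_ne_zero_iff.1 hne
  exact hwC (hchord s t (pos_of_mul_pos_left (hψw.lt_of_ne' hs) hψa.le)
    (pos_of_mul_pos_left (hφw.lt_of_ne' ht) hφb.le))

/-- The Hilbert distance on the chord `α` between the projections of `x` and `y`: the affine chart
`φ / ψ` maps `α` onto `(0, ∞)` and is unchanged by the projection. -/
noncomputable def chordDist {E : Type*} [AddCommGroup E] [Module ℝ E] (φ ψ : E →ₗ[ℝ] ℝ)
    (x y : E) : ℝ :=
  |log (φ x * ψ y / (ψ x * φ y))| / 2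

theorem chordDist_nonneg {E : Type*} [AddCommGroup E] [Module ℝ E] (φ ψ : E →ₗ[ℝ] ℝ) (x y : E) :
    0 ≤ chordDist φ ψ x y :=
  div_nonneg (abs_nonneg _) two_pos.le

section HilbertDist

variable {n : ℕ} {C : Set (Fin (n + 1) → ℝ)} {φ ψ : (Fin (n + 1) → ℝ) →ₗ[ℝ] ℝ}

theorem chordDist_le_of_hilbertDistEq (hφ : ∀ w ∈ frontier C, 0 ≤ φ w)
    (hψ : ∀ w ∈ frontier C, 0 ≤ ψ w) {x y : Fin (n + 1) → ℝ} {d : ℝ}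
    (hφx : 0 < φ x) (hψx : 0 < ψ x) (hφy : 0 < φ y) (hψy : 0 < ψ y)
    (h : HilbertDistEq C x y d) : chordDist φ ψ x y ≤ d := by
  rcases h with ⟨⟨t, ht, rfl⟩, rfl⟩ |
    ⟨a', b', ha', hb', α, β, γ, δ, hα, hβ, hγ, hδ, rfl, rfl, rfl⟩
  · have hratio : φ x * ψ (t • x) / (ψ x * φ (t • x)) = 1 := by
      simp only [map_smul, smul_eq_mul]
      field_simp
    rw [chordDist, hratio, log_one, abs_zero, zero_div]
  · simp only [chordDist, map_add, map_smul, smul_eq_mul] at hφx hψx hφy hψy ⊢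
    exact (div_le_div_iff_of_pos_right two_pos).2 <| abs_log_cross_ratio_le hα hβ hγ hδ
      (hψ a' ha') (hφ a' ha') (hψ b' hb') (hφ b' hb') hψx hφx hψy hφy

theorem HilbertDistEq.le_chordDist (hCo : IsOpen C) {a b : Fin (n + 1) → ℝ}
    (hchord : ∀ s t : ℝ, 0 < s → 0 < t → s • a + t • b ∈ C)
    (hφa : φ a = 0) (hψb : ψ b = 0) (hψa : 0 < ψ a) (hφb : 0 < φ b)
    (hφ : ∀ w ∈ frontier C, 0 ≤ φ w) (hψ : ∀ w ∈ frontier C, 0 ≤ ψ w)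
    {u v : Fin (n + 1) → ℝ} {d : ℝ} (hu : u ∈ span ℝ {a, b}) (hv : v ∈ span ℝ {a, b})
    (hφu : 0 < φ u) (hψu : 0 < ψ u) (hφv : 0 < φ v) (hψv : 0 < ψ v)
    (h : HilbertDistEq C u v d) : d ≤ chordDist φ ψ u v := by
  rcases h with ⟨-, rfl⟩ | ⟨a', b', ha', hb', α, β, γ, δ, hα, -, -, hδ, rfl, rfl, rfl⟩
  · exact chordDist_nonneg φ ψ _ _
  by_cases hdet : α * δ - β * γ = 0
  · rw [show β * γ = α * δ by linarith, div_self (by positivity), log_one, abs_zero, zero_div]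
    exact chordDist_nonneg φ ψ _ _
  have hplane : span ℝ {α • a' + β • b', γ • a' + δ • b'} ≤ span ℝ {a, b} :=
    span_le.2 (Set.insert_subset hu (Set.singleton_subset_iff.2 hv))
  have ha'_mem : a' ∈ span ℝ {a, b} := hplane (mem_span_pair_of_det_ne_zero rfl rfl hdet)
  have hb'_mem : b' ∈ span ℝ {a, b} := hplane <|
    mem_span_pair_of_det_ne_zero (add_comm _ _) (add_comm _ _) (by contrapose! hdet; linarith)
  have hfrontier : ∀ w ∈ frontier C, w ∉ C := fun w hw => (hCo.frontier_eq ▸ hw).2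
  have hef := mul_eq_zero_of_mem_span_pair_of_notMem hchord hφa hψb hψa hφb ha'_mem
    (hfrontier a' ha') (hψ a' ha') (hφ a' ha')
  have hgh := mul_eq_zero_of_mem_span_pair_of_notMem hchord hφa hψb hψa hφb hb'_mem
    (hfrontier b' hb') (hψ b' hb') (hφ b' hb')
  simp only [chordDist, map_add, map_smul, smul_eq_mul] at hφu hψu hφv hψv ⊢
  rw [abs_log_cross_ratio_eq_of_mul_eq_zero hef hgh hψu hφu hψv hφv]

end HilbertDist

theorem projection_decreases_hilbert_general (n : ℕ) (C : Set (Fin (n+1) → ℝ))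
    (hCo : IsOpen C)
    (a b : Fin (n+1) → ℝ) (ha : a ∈ frontier C) (hb : b ∈ frontier C)
    (hchord : ∀ α β : ℝ, 0 < α → 0 < β → α • a + β • b ∈ C)
    (φ ψ : (Fin (n+1) → ℝ) →ₗ[ℝ] ℝ)
    (hφa : φ a = 0) (hφpos : ∀ x ∈ C, 0 < φ x)
    (hψb : ψ b = 0) (hψpos : ∀ x ∈ C, 0 < ψ x)
    (hφb : φ b ≠ 0) (hψa : ψ a ≠ 0)
    (x y : Fin (n+1) → ℝ) (hx : x ∈ C) (hy : y ∈ C)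
    (d₁ d₂ : ℝ)
    (h1 : HilbertDistEq C x y d₁)
    (h2 : HilbertDistEq C ((ψ x / ψ a) • a + (φ x / φ b) • b)
                         ((ψ y / ψ a) • a + (φ y / φ b) • b) d₂) :
    d₂ ≤ d₁ := by
  have hφ : ∀ w ∈ frontier C, 0 ≤ φ w := fun w hw =>
    le_on_closure (fun z hz => (hφpos z hz).le) continuousOn_const
      φ.continuous_of_finiteDimensional.continuousOn (frontier_subset_closure hw)
  have hψ : ∀ w ∈ frontier C, 0 ≤ ψ w := fun w hw =>
    le_on_closure (fun z hz => (hψpos z hz).le) continuousOn_const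
      ψ.continuous_of_finiteDimensional.continuousOn (frontier_subset_closure hw)
  have hψa₀ : 0 < ψ a := (hψ a ha).lt_of_ne' hψa
  have hφb₀ : 0 < φ b := (hφ b hb).lt_of_ne' hφb
  have hφπ : ∀ z, φ ((ψ z / ψ a) • a + (φ z / φ b) • b) = φ z := fun z => by
    simp [hφa, hφb₀.ne']
  have hψπ : ∀ z, ψ ((ψ z / ψ a) • a + (φ z / φ b) • b) = ψ z := fun z => by
    simp [hψb, hψa₀.ne']
  have hπ : ∀ z, (ψ z / ψ a) • a + (φ z / φ b) • b ∈ span ℝ {a, b} := fun z =>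
    mem_span_pair.2 ⟨_, _, rfl⟩
  calc d₂ ≤ chordDist φ ψ ((ψ x / ψ a) • a + (φ x / φ b) • b)
        ((ψ y / ψ a) • a + (φ y / φ b) • b) :=
        h2.le_chordDist hCo hchord hφa hψb hψa₀ hφb₀ hφ hψ (hπ x) (hπ y)
          ((hφπ x).symm ▸ hφpos x hx) ((hψπ x).symm ▸ hψpos x hx)
          ((hφπ y).symm ▸ hφpos y hy) ((hψπ y).symm ▸ hψpos y hy)
    _ = chordDist φ ψ x y := by simp only [chordDist, hφπ, hψπ]
    _ ≤ d₁ := chordDist_le_of_hilbertDistEq hφ hψ (hφpos x hx) (hψpos x hx)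
        (hφpos y hy) (hψpos y hy) h1

/-- **Projection decreases the Hilbert metric.** Let `Ω = P(C)` be an open properly convex
domain, `α = (a,b)` a proper open chord of `Ω` with supporting hyperplanes `ker φ` at `a`
and `ker ψ` at `b`, and let `π` be projection along `P = ker φ ∩ ker ψ` onto the chord,
given by `π x = (ψx/ψa)·a + (φx/φb)·b`.  Then `d_Ω(πx, πy) ≤ d_Ω(x, y)`. -/
theorem projection_decreases_hilbert (n : ℕ) (C : Set (Fin (n+1) → ℝ))
    (hCo : IsOpen C) (hCc : IsCone C) (hconv : Convex ℝ C) (hsharp : IsSharp C)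
    (hne : C.Nonempty)
    (a b : Fin (n+1) → ℝ) (ha : a ∈ frontier C) (hb : b ∈ frontier C)
    (hchord : ∀ α β : ℝ, 0 < α → 0 < β → α • a + β • b ∈ C)
    (φ ψ : (Fin (n+1) → ℝ) →ₗ[ℝ] ℝ)
    (hφa : φ a = 0) (hφpos : ∀ x ∈ C, 0 < φ x)
    (hψb : ψ b = 0) (hψpos : ∀ x ∈ C, 0 < ψ x)
    (hφb : φ b ≠ 0) (hψa : ψ a ≠ 0)
    (x y : Fin (n+1) → ℝ) (hx : x ∈ C) (hy : y ∈ C)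
    (d₁ d₂ : ℝ)
    (h1 : HilbertDistEq C x y d₁)
    (h2 : HilbertDistEq C ((ψ x / ψ a) • a + (φ x / φ b) • b)
                         ((ψ y / ψ a) • a + (φ y / φ b) • b) d₂) :
    d₂ ≤ d₁ :=
  projection_decreases_hilbert_general n C hCo a b ha hb hchord φ ψ hφa hφpos hψb hψpos hφb hψa x y
    hx hy d₁ d₂ h1 h2
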